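/- arXiv:1812.10680 — 4 statements merged into one kernel-verified Lean document; each statement's English description precedes it below -/
import Mathlib

section
/- Let (V, L, ∂) be a crossed module over a Lie algebra with M = ker ∂ and g = coker ∂. Choose a linear section s : g → L of π : L → g (π∘s = id) and a linear section q : Im(∂) → V of ∂ (∂∘q = id). Define g(x,y) = q([s(x), s(y)] - s[x,y]) and θ(x,y,z) = [s(x), g(y,z)] - [s(y), g(x,z)] + [s(z), g(x,y)] - g([x,y], z) + g([x,z], y) - g([y,z], x). Then θ(x,y,z) ∈ ker(∂) = M for all x, y, z ∈ g. -/
/-!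
With `F(x, y) = [s x, s y] - s [x, y]`, the defect of `s` from being a Lie algebra map, we have
`∂ g = F`, since `F` takes values in `ker π = Im ∂`. As `∂` is `L`-equivariant, `∂ θ` is then the
Chevalley–Eilenberg coboundary of `F` for the action of `g` through `s`, and this vanishes by the
Bianchi identity for `F`, which is just the Jacobi identity in `L` and in `g`.
-/

variable {K L V g : Type} [Field K] [LieRing L] [LieAlgebra K L]
  [AddCommGroup V] [Module K V] [LieRingModule L V] [LieModule K L V]
  [LieRing g] [LieAlgebra K g]

/-- `g(x,y) = q([s(x), s(y)] - s[x,y])`. -/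
def gAux (s : g →ₗ[K] L) (q : L →ₗ[K] V) (x y : g) : V :=
  q (⁅s x, s y⁆ - s ⁅x, y⁆)

/-- The `3`-cochain `θ` associated to a crossed module with chosen sections `s`, `q`. -/
def theta (s : g →ₗ[K] L) (q : L →ₗ[K] V) (x y z : g) : V :=
  ⁅s x, gAux s q y z⁆ - ⁅s y, gAux s q x z⁆ + ⁅s z, gAux s q x y⁆
    - gAux s q ⁅x, y⁆ z + gAux s q ⁅x, z⁆ y - gAux s q ⁅y, z⁆ x

def curvature (s : g →ₗ[K] L) (x y : g) : L :=
  ⁅s x, s y⁆ - s ⁅x, y⁆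

theorem curvature_bianchi (s : g →ₗ[K] L) (x y z : g) :
    ⁅s x, curvature s y z⁆ - ⁅s y, curvature s x z⁆ + ⁅s z, curvature s x y⁆
      - curvature s ⁅x, y⁆ z + curvature s ⁅x, z⁆ y - curvature s ⁅y, z⁆ x = 0 := by
  have jacobi_L : ⁅s x, ⁅s y, s z⁆⁆ - ⁅s y, ⁅s x, s z⁆⁆ + ⁅s z, ⁅s x, s y⁆⁆ = 0 := by
    rw [← lie_lie, ← lie_skew]; abel
  have jacobi_g : ⁅⁅x, y⁆, z⁆ - ⁅⁅x, z⁆, y⁆ + ⁅⁅y, z⁆, x⁆ = 0 := by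
    rw [← lie_skew ⁅x, y⁆, ← lie_skew ⁅x, z⁆, ← lie_skew ⁅y, z⁆, ← lie_skew x z, lie_neg]
    linear_combination (norm := abel) -lie_jacobi x y z
  simp only [curvature, lie_sub]
  rw [← lie_skew (s ⁅x, y⁆), ← lie_skew (s ⁅x, z⁆), ← lie_skew (s ⁅y, z⁆)]
  linear_combination (norm := (simp only [map_add, map_sub, map_zero]; abel))
    jacobi_L + congrArg s jacobi_g

theorem map_curvature_eq_zero (π : L →ₗ⁅K⁆ g) (s : g →ₗ[K] L) (hs : ∀ x : g, π (s x) = x)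
    (x y : g) : π (curvature s x y) = 0 := by
  simp [curvature, hs]

theorem map_theta_eq_zero {V : Type} [AddCommGroup V] [Module K V] [LieRingModule L V]
    (d : V →ₗ[K] L) (hmod : ∀ (x : L) (v : V), d ⁅x, v⁆ = ⁅x, d v⁆)
    (s : g →ₗ[K] L) (q : L →ₗ[K] V) (hlift : ∀ x y : g, d (gAux s q x y) = curvature s x y)
    (x y z : g) : d (theta s q x y z) = 0 := by
  rw [← curvature_bianchi s x y z]
  simp only [theta, map_add, map_sub, hmod, hlift]

theorem crossed_ext_stmt5_general
    (d : V →ₗ[K] L)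
    (hmod : ∀ (x : L) (v : V), d ⁅x, v⁆ = ⁅x, d v⁆)
    (π : L →ₗ⁅K⁆ g)
    (hker : ∀ z : L, π z = 0 ↔ z ∈ LinearMap.range d)
    (s : g →ₗ[K] L) (hs : ∀ x : g, π (s x) = x)
    (q : L →ₗ[K] V) (hq : ∀ z ∈ LinearMap.range d, d (q z) = z) :
    ∀ x y z : g, d (theta s q x y z) = 0 :=
  map_theta_eq_zero d hmod s q fun x y =>
    hq _ ((hker _).mp (map_curvature_eq_zero π s hs x y))

/-- with `(V, L, ∂)` a crossed module, `π : L → g = coker ∂` and sections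
`s` of `π` and `q` of `∂`, the cochain `θ` takes values in `M = ker ∂`. -/
theorem crossed_ext_stmt5
    (d : V →ₗ[K] L)
    (hmod : ∀ (x : L) (v : V), d ⁅x, v⁆ = ⁅x, d v⁆)
    (hcross : ∀ v w : V, ⁅d v, w⁆ = - ⁅d w, v⁆)
    (π : L →ₗ⁅K⁆ g) (hπ : Function.Surjective π)
    (hker : ∀ z : L, π z = 0 ↔ z ∈ LinearMap.range d)
    (s : g →ₗ[K] L) (hs : ∀ x : g, π (s x) = x)
    (q : L →ₗ[K] V) (hq : ∀ z ∈ LinearMap.range d, d (q z) = z) :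
    ∀ x y z : g, d (theta s q x y z) = 0 :=
  crossed_ext_stmt5_general d hmod π hker s hs q hq
end

section
/- Let (V, L, ∂) be a crossed module over a Lie algebra with cokernel g and kernel M, and let s, s̄ : g → L be two linear sections of π and q a section of ∂. Then the associated 3-cocycles θ_{s,q} and θ_{s̄,q} differ by a Chevalley-Eilenberg coboundary: there exists c : ∧²g → M with θ_{s,q} - θ_{s̄,q} = δc. In fact one may take c = g - ḡ - b where b(x,y) = [s(x), h(y)] - h([x,y]) - [s(y), h(x)] - [∂h(x), h(y)] and h : g → V is any linear map with s - s̄ = ∂ ∘ h. -/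
/-!
Write `F_s x y = [s x, s y] - s [x, y]` (`curv s`) for the curvature of a linear map `s : g → L`
and `δ_s` (`ceDiff s`) for the Chevalley–Eilenberg differential of `V`-valued 2-cochains twisted
by `s`, so that `θ_{s,q} = δ_s g_s` and `∂ ∘ g_s = F_s`. Since `s = s̄ + ∂h`, replacing `δ_s̄` by
`δ_s` adds the wedge (`lieWedge`) of `∂h` with the cochain, which on `g_s̄` equals `-F_s̄ ∧ h` by
the Peiffer identity. On the other side `b = d_s h - [∂h, h]` with `d_s` (`covDiff s`) the
covariant derivative: `δ_s d_s h = F_s ∧ h` (the square of a covariant derivative is its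
curvature), while `δ_s [∂h, h] = (F_s - F_s̄) ∧ h` because `L` acts by derivations on the Lie
bracket `[∂v, w]` of `V`. Hence `δ_s b = F_s̄ ∧ h` is exactly the discrepancy, and
`∂b = F_s - F_s̄` gives `∂c = 0`.
-/

variable {K L V g : Type} [Field K] [LieRing L] [LieAlgebra K L]
  [AddCommGroup V] [Module K V] [LieRingModule L V] [LieModule K L V]
  [LieRing g] [LieAlgebra K g]

/-- The `2`-cochain `b(x,y) = [s(x), h(y)] - h([x,y]) - [s(y), h(x)] - [∂h(x), h(y)]`. -/
def bAux (d : V →ₗ[K] L) (s : g →ₗ[K] L) (h : g →ₗ[K] V) (x y : g) : V :=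
  ⁅s x, h y⁆ - h ⁅x, y⁆ - ⁅s y, h x⁆ - ⁅d (h x), h y⁆

def ceDiff (s : g → L) (c : g → g → V) (x y z : g) : V :=
  ⁅s x, c y z⁆ - ⁅s y, c x z⁆ + ⁅s z, c x y⁆ - c ⁅x, y⁆ z + c ⁅x, z⁆ y - c ⁅y, z⁆ x

def curv (s : g → L) (x y : g) : L :=
  ⁅s x, s y⁆ - s ⁅x, y⁆

def covDiff (s : g → L) (h : g → V) (x y : g) : V :=
  ⁅s x, h y⁆ - ⁅s y, h x⁆ - h ⁅x, y⁆

def lieWedge {ι : Type*} (E : ι → ι → L) (h : ι → V) (x y z : ι) : V :=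
  ⁅E x y, h z⁆ - ⁅E x z, h y⁆ + ⁅E y z, h x⁆

theorem ceDiff_sub (s : g → L) (c₁ c₂ : g → g → V) (x y z : g) :
    ceDiff s (c₁ - c₂) x y z = ceDiff s c₁ x y z - ceDiff s c₂ x y z := by
  simp only [ceDiff, Pi.sub_apply, lie_sub]
  abel

theorem lieWedge_sub {ι : Type*} (E₁ E₂ : ι → ι → L) (h : ι → V) (x y z : ι) :
    lieWedge (E₁ - E₂) h x y z = lieWedge E₁ h x y z - lieWedge E₂ h x y z := by
  simp only [lieWedge, Pi.sub_apply, sub_lie]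
  abel

theorem lie_lie_sub_lie_lie_add_lie_lie (x y z : g) :
    ⁅⁅x, y⁆, z⁆ - ⁅⁅x, z⁆, y⁆ + ⁅⁅y, z⁆, x⁆ = 0 := by
  rw [← lie_skew ⁅x, y⁆ z, ← lie_skew ⁅x, z⁆ y, ← lie_skew ⁅y, z⁆ x, ← lie_skew x z, lie_neg,
    ← neg_eq_zero, ← lie_jacobi x y z]
  abel

theorem curv_sub_curv_sub (s k : g → L) (x y : g) :
    curv s x y - curv (s - k) x y = ⁅s x, k y⁆ - ⁅s y, k x⁆ - ⁅k x, k y⁆ - k ⁅x, y⁆ := by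
  simp only [curv, Pi.sub_apply, lie_sub, sub_lie]
  rw [← lie_skew (k x) (s y)]
  abel

theorem map_curv_eq_zero {R : Type*} [CommRing R] [LieAlgebra R L] [LieAlgebra R g]
    (π : L →ₗ⁅R⁆ g) {t : g → L} (ht : ∀ x, π (t x) = x) (x y : g) : π (curv t x y) = 0 := by
  rw [curv, map_sub, LieHom.map_lie, ht, ht, ht, sub_self]

theorem ceDiff_covDiff (s : g → L) {F : Type*} [FunLike F g V] [AddMonoidHomClass F g V]
    (h : F) (x y z : g) :
    ceDiff s (covDiff s h) x y z = lieWedge (curv s) h x y z := by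
  have hJ := congrArg h (lie_lie_sub_lie_lie_add_lie_lie x y z)
  rw [map_add, map_sub, map_zero] at hJ
  simp only [ceDiff, covDiff, lieWedge, curv, lie_sub, sub_lie, lie_lie (M := V)]
  linear_combination (norm := abel1) hJ

theorem lie_peiffer {d : V → L} (hmod : ∀ (x : L) (v : V), d ⁅x, v⁆ = ⁅x, d v⁆)
    (hcross : ∀ v w : V, ⁅d v, w⁆ = -⁅d w, v⁆) (u : L) (v w : V) :
    ⁅u, ⁅d v, w⁆⁆ = ⁅d ⁅u, v⁆, w⁆ - ⁅d ⁅u, w⁆, v⁆ := by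
  rw [hmod, lie_lie, hcross v ⁅u, w⁆]
  abel

theorem peiffer_jacobi {d : V → L} (hmod : ∀ (x : L) (v : V), d ⁅x, v⁆ = ⁅x, d v⁆)
    (hcross : ∀ v w : V, ⁅d v, w⁆ = -⁅d w, v⁆) (u v w : V) :
    ⁅d ⁅d u, v⁆, w⁆ - ⁅d ⁅d u, w⁆, v⁆ + ⁅d ⁅d v, w⁆, u⁆ = 0 := by
  rw [hmod, lie_lie, hcross ⁅d u, w⁆, hcross ⁅d v, w⁆]
  abel

theorem ceDiff_peiffer {d : V → L} (hmod : ∀ (x : L) (v : V), d ⁅x, v⁆ = ⁅x, d v⁆)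
    (hcross : ∀ v w : V, ⁅d v, w⁆ = -⁅d w, v⁆) (s : g → L) (h : g → V) (x y z : g) :
    ceDiff s (fun a b => ⁅d (h a), h b⁆) x y z =
      lieWedge (curv s - curv (s - fun a => d (h a))) h x y z := by
  simp only [lieWedge, Pi.sub_apply, curv_sub_curv_sub, ceDiff, sub_lie, ← hmod]
  rw [lie_peiffer hmod hcross (s x), lie_peiffer hmod hcross (s y), lie_peiffer hmod hcross (s z)]
  linear_combination (norm := abel1) peiffer_jacobi hmod hcross (h x) (h y) (h z)

theorem ceDiff_sub_ceDiff {s s' : g → L} {d : V → L} (hcross : ∀ v w : V, ⁅d v, w⁆ = -⁅d w, v⁆)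
    {h : g → V} (hh : ∀ x, s x - s' x = d (h x)) (c : g → g → V) (x y z : g) :
    ceDiff s c x y z - ceDiff s' c x y z = -lieWedge (fun a b => d (c a b)) h x y z := by
  have hlie : ∀ (x : g) (v : V), ⁅s x, v⁆ = ⁅s' x, v⁆ - ⁅d v, h x⁆ := fun x v => by
    rw [← sub_add_cancel (s x) (s' x), hh, add_lie, hcross]
    abel
  simp only [ceDiff, lieWedge, hlie]
  abel

theorem crossed_ext_stmt8_general
    (d : V →ₗ[K] L)
    (hmod : ∀ (x : L) (v : V), d ⁅x, v⁆ = ⁅x, d v⁆)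
    (hcross : ∀ v w : V, ⁅d v, w⁆ = - ⁅d w, v⁆)
    (π : L →ₗ⁅K⁆ g)
    (hker : ∀ z : L, π z = 0 ↔ z ∈ LinearMap.range d)
    (s s' : g →ₗ[K] L) (hs : ∀ x : g, π (s x) = x) (hs' : ∀ x : g, π (s' x) = x)
    (q : L →ₗ[K] V) (hq : ∀ z ∈ LinearMap.range d, d (q z) = z)
    (h : g →ₗ[K] V) (hh : ∀ x : g, s x - s' x = d (h x)) :
    let c : g → g → V := fun x y => gAux s q x y - gAux s' q x y - bAux d s h x y
    (∀ x y : g, d (c x y) = 0) ∧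
    (∀ x y z : g,
      theta s q x y z - theta s' q x y z =
        ⁅s x, c y z⁆ - ⁅s y, c x z⁆ + ⁅s z, c x y⁆
          - c ⁅x, y⁆ z + c ⁅x, z⁆ y - c ⁅y, z⁆ x) := by
  intro c
  have hdg (t : g →ₗ[K] L) (ht : ∀ x, π (t x) = x) : (fun x y => d (gAux t q x y)) = curv t :=
    funext₂ fun x y => hq _ ((hker _).mp (map_curv_eq_zero π ht x y))
  have hs'_sub : ⇑s' = ⇑s - fun x => d (h x) := funext fun x => by
    rw [Pi.sub_apply, ← hh, sub_sub_cancel]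
  have hb : bAux d s h = covDiff s h - fun x y => ⁅d (h x), h y⁆ := funext₂ fun x y => by
    simp only [bAux, covDiff, Pi.sub_apply]
    abel
  refine ⟨fun x y => ?_, fun x y z => ?_⟩
  · have hdb : d (bAux d s h x y) = curv s x y - curv s' x y := by
      rw [hs'_sub, curv_sub_curv_sub]
      simp only [bAux, map_sub, hmod]
      abel
    simp only [c, map_sub, hdb, ← congrFun₂ (hdg s hs), ← congrFun₂ (hdg s' hs'), sub_self]
  · have hδb : ceDiff s (bAux d s h) x y z = lieWedge (curv s') h x y z := by
      rw [hb, ceDiff_sub, ceDiff_covDiff, ceDiff_peiffer hmod hcross, ← hs'_sub, lieWedge_sub,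
        sub_sub_cancel]
    calc theta s q x y z - theta s' q x y z
        = ceDiff s (gAux s q) x y z - ceDiff s' (gAux s' q) x y z := rfl
      _ = ceDiff s (gAux s q) x y z - ceDiff s (gAux s' q) x y z
            - ceDiff s (bAux d s h) x y z := by
          rw [hδb, ← hdg s' hs', ← sub_add_sub_cancel _ (ceDiff s (gAux s' q) x y z),
            ceDiff_sub_ceDiff hcross hh]
          abel
      _ = ceDiff s c x y z := by
          rw [← ceDiff_sub, ← ceDiff_sub]
          rfl

/-- the `3`-cocycles associated to two different sections `s`, `s'` of `π`
differ by the Chevalley-Eilenberg coboundary of `c = g - ḡ - b`. -/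
theorem crossed_ext_stmt8
    (d : V →ₗ[K] L)
    (hmod : ∀ (x : L) (v : V), d ⁅x, v⁆ = ⁅x, d v⁆)
    (hcross : ∀ v w : V, ⁅d v, w⁆ = - ⁅d w, v⁆)
    (π : L →ₗ⁅K⁆ g) (hπ : Function.Surjective π)
    (hker : ∀ z : L, π z = 0 ↔ z ∈ LinearMap.range d)
    (s s' : g →ₗ[K] L) (hs : ∀ x : g, π (s x) = x) (hs' : ∀ x : g, π (s' x) = x)
    (q : L →ₗ[K] V) (hq : ∀ z ∈ LinearMap.range d, d (q z) = z)
    (h : g →ₗ[K] V) (hh : ∀ x : g, s x - s' x = d (h x)) :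
    let c : g → g → V := fun x y => gAux s q x y - gAux s' q x y - bAux d s h x y
    (∀ x y : g, d (c x y) = 0) ∧
    (∀ x y z : g,
      theta s q x y z - theta s' q x y z =
        ⁅s x, c y z⁆ - ⁅s y, c x z⁆ + ⁅s z, c x y⁆
          - c ⁅x, y⁆ z + c ⁅x, z⁆ y - c ⁅y, z⁆ x) :=
  crossed_ext_stmt8_general d hmod hcross π hker s s' hs hs' q hq h hh
end

section
/- Let g be a Lie algebra, 0 → M → M' →^π M'' → 0 a short exact sequence of g-modules, and 0 → M'' → e → g → 0 an abelian extension of Lie algebras with e = M'' ⊕ g as a vector space and bracket [(m₁,x₁),(m₂,x₂)] = ([x₁,m₂] - [x₂,m₁] + φ(x₁,x₂), [x₁,x₂]) for a 2-cocycle φ. Define μ : M' → e by μ(m') = (π(m'), 0), and let e act on M' by [(m'',x), m'] := [x, m']. Then (M', e, μ) is a crossed module over a Lie algebra: μ is an e-module map and [μ(v), w] = -[μ(w), v] for all v, w ∈ M'. -/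
theorem crossed_ext_stmt10_general {K g M' M'' : Type} [Field K] [LieRing g] [LieAlgebra K g]
    [AddCommGroup M'] [Module K M'] [LieRingModule g M']
    [AddCommGroup M''] [Module K M''] [LieRingModule g M'']
    -- the short exact sequence 0 → M → M' → M'' → 0
    (π : M' →ₗ⁅K,g⁆ M'')
    -- a 2-cocycle φ on g with values in M''
    (φ : g →ₗ[K] g →ₗ[K] M'') :
    -- the bracket of the abelian extension e = M'' ⊕ g,
    let br : (M'' × g) → (M'' × g) → (M'' × g) := fun p q =>
      (⁅p.2, q.1⁆ - ⁅q.2, p.1⁆ + φ p.2 q.2, ⁅p.2, q.2⁆)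
    -- the action of e on M',
    let act : (M'' × g) → M' → M' := fun p m' => ⁅p.2, m'⁆
    -- and the map μ : M' → e.
    let μ : M' → (M'' × g) := fun m' => (π m', 0)
    -- Then `act` is an action of the Lie algebra e on M',
    (∀ p q : M'' × g, ∀ m' : M', act (br p q) m' = act p (act q m') - act q (act p m')) ∧
    -- μ is a map of e-modules,
    (∀ (p : M'' × g) (m' : M'), μ (act p m') = br p (μ m')) ∧
    -- and the crossed module condition [μ v, w] = -[μ w, v] holds.
    (∀ v w : M', act (μ v) w = - act (μ w) v) := by
  intro br act μ
  refine ⟨fun p q m' => lie_lie p.2 q.2 m', fun p m' => ?_, fun v w => ?_⟩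
  · show (π ⁅p.2, m'⁆, 0) = (⁅p.2, π m'⁆ - ⁅(0 : g), p.1⁆ + φ p.2 0, ⁅p.2, (0 : g)⁆)
    rw [LieModuleHom.map_lie, zero_lie, map_zero, lie_zero, sub_zero, add_zero]
  · show ⁅(0 : g), w⁆ = -⁅(0 : g), v⁆
    rw [zero_lie, zero_lie, neg_zero]

/-- given a short exact sequence `0 → M → M' →^π M'' → 0` of `g`-modules and
an abelian extension `e = M'' ⊕ g` of `g` by `M''` determined by a `2`-cocycle `φ`, the pair
`(M', e, μ)` with `μ(m') = (π(m'), 0)` and the `e`-action `[(m'', x), m'] = [x, m']` is a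
crossed module over a Lie algebra. -/
theorem crossed_ext_stmt10 {K g M M' M'' : Type} [Field K] [LieRing g] [LieAlgebra K g]
    [AddCommGroup M] [Module K M] [LieRingModule g M] [LieModule K g M]
    [AddCommGroup M'] [Module K M'] [LieRingModule g M'] [LieModule K g M']
    [AddCommGroup M''] [Module K M''] [LieRingModule g M''] [LieModule K g M'']
    -- the short exact sequence 0 → M → M' → M'' → 0
    (ι : M →ₗ⁅K,g⁆ M') (π : M' →ₗ⁅K,g⁆ M'')
    (hι : Function.Injective ι) (hπ : Function.Surjective π)
    (hexact : LinearMap.range (ι : M →ₗ[K] M') = LinearMap.ker (π : M' →ₗ[K] M''))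
    -- a 2-cocycle φ on g with values in M''
    (φ : g →ₗ[K] g →ₗ[K] M'') (hφalt : ∀ x : g, φ x x = 0)
    (hφcocycle : ∀ x y z : g,
      ⁅x, φ y z⁆ - ⁅y, φ x z⁆ + ⁅z, φ x y⁆ - φ ⁅x, y⁆ z + φ ⁅x, z⁆ y - φ ⁅y, z⁆ x = 0) :
    -- the bracket of the abelian extension e = M'' ⊕ g,
    let br : (M'' × g) → (M'' × g) → (M'' × g) := fun p q =>
      (⁅p.2, q.1⁆ - ⁅q.2, p.1⁆ + φ p.2 q.2, ⁅p.2, q.2⁆)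
    -- the action of e on M',
    let act : (M'' × g) → M' → M' := fun p m' => ⁅p.2, m'⁆
    -- and the map μ : M' → e.
    let μ : M' → (M'' × g) := fun m' => (π m', 0)
    -- Then `act` is an action of the Lie algebra e on M',
    (∀ p q : M'' × g, ∀ m' : M', act (br p q) m' = act p (act q m') - act q (act p m')) ∧
    -- μ is a map of e-modules,
    (∀ (p : M'' × g) (m' : M'), μ (act p m') = br p (μ m')) ∧
    -- and the crossed module condition [μ v, w] = -[μ w, v] holds.
    (∀ v w : M', act (μ v) w = - act (μ w) v) :=
  crossed_ext_stmt10_general π φ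
end

section
/- Let E = (0 → M →^f M_{n-1} → ⋯ → M₁ →^{∂₁} L →^π g → 0) be a crossed n-fold extension of a Lie algebra g by a g-module M, with n ≥ 3. Suppose there exists a g-module morphism gmap : M_{n-1} → M with gmap ∘ f = id_M. Then the tuple of maps (id_M, gmap, 0, …, 0, π) defines a morphism of crossed n-fold extensions from E to the zero extension 0 → M = M → 0 → ⋯ → 0 → g = g → 0; in particular all required squares commute and (0, π) : (M₁, L, ∂₁) → (0, g, 0) is a morphism of crossed modules. -/
/-! Crossed `n`-fold extensions of a Lie algebra `g` by a `g`-module `M`, for `n = t + 2`.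

The underlying data of a crossed `n`-fold extension
`0 → M → M_{n-1} → ⋯ → M₁ → L → g → 0` is recorded as follows: `L` is the Lie algebra,
`V = M₁` is the `L`-module of the crossed module `(M₁, L, ∂₁)`, and `Mod i` for
`0 ≤ i ≤ t - 1` are the `g`-modules `M_{i+2}`, so that `Mod (t-1) = M_{n-1}`
(the family `Mod` is indexed by all of `ℕ`; indices `≥ t` are junk).  For uniformity the
module `M` itself is glued onto the top of the chain via a linear equivalence
`e : M ≃ₗ Mod t`, so that the map `f : M → M_{n-1}` of the extension is the composite of
`e` with the connecting map out of `Mod t` (`d (t-1)` if `t ≥ 1`, and `d2` if `t = 0`). -/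

/-- The data of a crossed `(t+2)`-fold extension of `g` by `M`. -/
structure LieCrossedExtData (K : Type) [Field K] (g : Type) [LieRing g] [LieAlgebra K g]
    (M : Type) [AddCommGroup M] [Module K M] [LieRingModule g M] [LieModule K g M]
    (t : ℕ) : Type 1 where
  L : Type
  [instLieRingL : LieRing L]
  [instLieAlgebraL : LieAlgebra K L]
  V : Type
  [instAddCommGroupV : AddCommGroup V]
  [instModuleV : Module K V]
  [instLieRingModuleV : LieRingModule L V]
  [instLieModuleV : LieModule K L V]
  Mod : ℕ → Type
  [instAddCommGroupMod : ∀ i, AddCommGroup (Mod i)]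
  [instModuleMod : ∀ i, Module K (Mod i)]
  [instLieRingModuleMod : ∀ i, LieRingModule g (Mod i)]
  [instLieModuleMod : ∀ i, LieModule K g (Mod i)]
  π : L →ₗ⁅K⁆ g
  d1 : V →ₗ[K] L
  d2 : Mod 0 →ₗ[K] V
  d : ∀ i : ℕ, Mod (i + 1) →ₗ[K] Mod i
  e : M ≃ₗ[K] Mod t

attribute [instance] LieCrossedExtData.instLieRingL LieCrossedExtData.instLieAlgebraL
  LieCrossedExtData.instAddCommGroupV LieCrossedExtData.instModuleV
  LieCrossedExtData.instLieRingModuleV LieCrossedExtData.instLieModuleV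
  LieCrossedExtData.instAddCommGroupMod LieCrossedExtData.instModuleMod
  LieCrossedExtData.instLieRingModuleMod LieCrossedExtData.instLieModuleMod

variable {K : Type} [Field K] {g : Type} [LieRing g] [LieAlgebra K g]
  {M : Type} [AddCommGroup M] [Module K M] [LieRingModule g M] [LieModule K g M]

/-- The axioms making such data a crossed `(t+2)`-fold extension of `g` by `M`:
`(V, L, ∂₁)` is a crossed module with cokernel `g`, the sequence is exact, all the maps
between `g`-modules are morphisms of `g`-modules (for `∂₂` this is expressed using lifts
along `π`), and the top map (which corresponds to `f : M → M_{n-1}`) is injective. -/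
def IsLieCrossedExt {t : ℕ} (E : LieCrossedExtData K g M t) : Prop :=
  -- (V, L, d1) is a crossed module: d1 is L-equivariant and ⁅∂v, w⁆ = -⁅∂w, v⁆
  (∀ (x : E.L) (v : E.V), E.d1 ⁅x, v⁆ = ⁅x, E.d1 v⁆) ∧
  (∀ v w : E.V, ⁅E.d1 v, w⁆ = - ⁅E.d1 w, v⁆) ∧
  -- π is onto and exactness holds at L
  Function.Surjective E.π ∧
  (∀ x : E.L, E.π x = 0 ↔ x ∈ LinearMap.range E.d1) ∧
  -- exactness at V = M₁
  (LinearMap.ker E.d1 = LinearMap.range E.d2) ∧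
  -- exactness at the modules M₂, …, M_{n-1}
  (1 ≤ t → LinearMap.ker E.d2 = LinearMap.range (E.d 0)) ∧
  (∀ j, j + 1 < t → LinearMap.ker (E.d j) = LinearMap.range (E.d (j + 1))) ∧
  -- injectivity of f : M → M_{n-1} (the map out of the copy of M on top)
  (t = 0 → Function.Injective E.d2) ∧
  (∀ k, k + 1 = t → Function.Injective (E.d k)) ∧
  -- d2, the d i and e are morphisms of g-modules
  (∀ (x : E.L) (m : E.Mod 0), E.d2 ⁅E.π x, m⁆ = ⁅x, E.d2 m⁆) ∧
  (∀ j, j < t → ∀ (x : g) (m : E.Mod (j + 1)), E.d j ⁅x, m⁆ = ⁅x, E.d j m⁆) ∧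
  (∀ (x : g) (m : M), E.e ⁅x, m⁆ = ⁅x, E.e m⁆)

/-- A morphism of crossed `(t+2)`-fold extensions inducing the identity on `g` and `M`:
the maps `β : L → L'` (a Lie algebra morphism), `δV = δ₁ : M₁ → M₁'` and
`δMod i : M_{i+2} → M_{i+2}'` make all squares commute, `(δ₁, β)` is a morphism of crossed
modules over the identity of `g`, and the `δMod i` are morphisms of `g`-modules. -/
def IsLieCrossedExtHom {t : ℕ} (E F : LieCrossedExtData K g M t)
    (β : E.L →ₗ⁅K⁆ F.L) (δV : E.V →ₗ[K] F.V)
    (δMod : ∀ i : ℕ, E.Mod i →ₗ[K] F.Mod i) : Prop :=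
  -- identity on g
  (∀ x : E.L, F.π (β x) = E.π x) ∧
  -- (δV, β) is a morphism of crossed modules
  (∀ v : E.V, F.d1 (δV v) = β (E.d1 v)) ∧
  (∀ (x : E.L) (v : E.V), δV ⁅x, v⁆ = ⁅β x, δV v⁆) ∧
  -- all the squares commute
  (∀ m : E.Mod 0, δV (E.d2 m) = F.d2 (δMod 0 m)) ∧
  (∀ j, j < t → ∀ m : E.Mod (j + 1), δMod j (E.d j m) = F.d j (δMod (j + 1) m)) ∧
  -- the δMod j are morphisms of g-modules
  (∀ j, j ≤ t → ∀ (x : g) (m : E.Mod j), δMod j ⁅x, m⁆ = ⁅x, δMod j m⁆) ∧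
  -- identity on M
  (∀ m : M, δMod t (E.e m) = F.e m)

section ZeroExtension

variable (K g M)

/-- The submodules of `M` used to build the zero extension: the quotient `M ⧸ zeroSub i`
is `M` at the top two spots of the chain and `0` below them. -/
def zeroSub (t i : ℕ) : LieSubmodule K g M := if t ≤ i + 1 then ⊥ else ⊤

theorem zeroSub_antitone (t i : ℕ) : zeroSub K g M t (i + 1) ≤ zeroSub K g M t i := by
  unfold zeroSub
  split_ifs with h1 h2
  · exact bot_le
  · exact bot_le
  · omega
  · exact le_rfl

/-- The zero crossed `(t+2)`-fold extension
`0 → M = M → 0 → ⋯ → 0 → g = g → 0` of `g` by `M`. -/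
def zeroExtData (t : ℕ) : LieCrossedExtData K g M t where
  L := g
  V := M ⧸ (⊤ : LieSubmodule K g M)
  Mod i := M ⧸ zeroSub K g M t i
  π := LieHom.id
  d1 := 0
  d2 := 0
  d i := Submodule.mapQ (zeroSub K g M t (i + 1)).toSubmodule
    (zeroSub K g M t i).toSubmodule LinearMap.id
    (fun x hx => zeroSub_antitone K g M t i hx)
  e := (Submodule.quotEquivOfEqBot (zeroSub K g M t t).toSubmodule
    (by simp [zeroSub])).symm

end ZeroExtension

/-! Below the top two spots the zero extension consists of zero modules, so every condition
there holds trivially. On the top spot, which carries the copy of `M`, the map is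
`gmap ∘ d u`, which makes the last square commute; it restricts to the identity of `M` precisely
because `gmap ∘ f = id`. Finally `(0, π)` is a morphism of crossed modules because exactness at
`L` gives `π ∘ ∂₁ = 0`. -/

namespace LieCrossedExtData

variable {t : ℕ} (E : LieCrossedExtData K g M t)

theorem π_d1_apply (hE : IsLieCrossedExt E) (v : E.V) : E.π (E.d1 v) = 0 :=
  (hE.2.2.2.1 (E.d1 v)).mpr ⟨v, rfl⟩

theorem d_lie (hE : IsLieCrossedExt E) {j : ℕ} (hj : j < t) (x : g) (m : E.Mod (j + 1)) :
    E.d j ⁅x, m⁆ = ⁅x, E.d j m⁆ :=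
  hE.2.2.2.2.2.2.2.2.2.2.1 j hj x m

def retractionFamily (u : ℕ) (gmap : E.Mod u →ₗ[K] M) (i : ℕ) : E.Mod i →ₗ[K] M :=
  if h : i = u then h ▸ gmap else if h : i = u + 1 then h ▸ (gmap ∘ₗ E.d u) else 0

variable {E}

@[simp]
theorem retractionFamily_self (u : ℕ) (gmap : E.Mod u →ₗ[K] M) :
    E.retractionFamily u gmap u = gmap := by
  simp [retractionFamily]

@[simp]
theorem retractionFamily_succ (u : ℕ) (gmap : E.Mod u →ₗ[K] M) :
    E.retractionFamily u gmap (u + 1) = gmap ∘ₗ E.d u := by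
  simp [retractionFamily]

end LieCrossedExtData

section ZeroExtension

variable (K g M)

instance zeroExtData_V_subsingleton (t : ℕ) : Subsingleton (zeroExtData K g M t).V :=
  Submodule.Quotient.subsingleton_iff.mpr rfl

theorem zeroExtData_mod_subsingleton {t i : ℕ} (h : i + 1 < t) :
    Subsingleton ((zeroExtData K g M t).Mod i) := by
  have hsub : zeroSub K g M t i = ⊤ := if_neg (by omega)
  exact Submodule.Quotient.subsingleton_iff.mpr (by rw [hsub]; rfl)

theorem zeroExtData_d_mk (t i : ℕ) (m : M) :
    (zeroExtData K g M t).d i (Submodule.Quotient.mk m) = Submodule.Quotient.mk m :=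
  rfl

theorem zeroExtData_e_apply (t : ℕ) (m : M) :
    (zeroExtData K g M t).e m = Submodule.Quotient.mk m :=
  rfl

end ZeroExtension

section Retraction

def retractionToZero {t : ℕ} (E : LieCrossedExtData K g M t) (u : ℕ) (gmap : E.Mod u →ₗ[K] M)
    (i : ℕ) : E.Mod i →ₗ[K] (zeroExtData K g M t).Mod i :=
  (zeroSub K g M t i).toSubmodule.mkQ ∘ₗ E.retractionFamily u gmap i

theorem retractionToZero_apply {t : ℕ} (E : LieCrossedExtData K g M t) (u : ℕ)
    (gmap : E.Mod u →ₗ[K] M) (i : ℕ) (m : E.Mod i) :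
    retractionToZero E u gmap i m = Submodule.Quotient.mk (E.retractionFamily u gmap i m) :=
  rfl

theorem retractionToZero_lie {t : ℕ} {E : LieCrossedExtData K g M t} {u : ℕ}
    {gmap : E.Mod u →ₗ[K] M} {i : ℕ} {x : g} {m : E.Mod i}
    (h : E.retractionFamily u gmap i ⁅x, m⁆ = ⁅x, E.retractionFamily u gmap i m⁆) :
    retractionToZero E u gmap i ⁅x, m⁆ = ⁅x, retractionToZero E u gmap i m⁆ := by
  change LieSubmodule.Quotient.mk' (zeroSub K g M t i) (E.retractionFamily u gmap i ⁅x, m⁆) =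
    ⁅x, LieSubmodule.Quotient.mk' (zeroSub K g M t i) (E.retractionFamily u gmap i m)⁆
  rw [h]
  exact (LieSubmodule.Quotient.mk' _).map_lie x _

variable {u : ℕ} {E : LieCrossedExtData K g M (u + 1)} {gmap : E.Mod u →ₗ[K] M}

theorem retractionToZero_apply_self (m : E.Mod u) :
    retractionToZero E u gmap u m = Submodule.Quotient.mk (gmap m) := by
  rw [retractionToZero_apply, LieCrossedExtData.retractionFamily_self]

theorem retractionToZero_eq_of_lt {j : ℕ} (hj : j < u) (a b : (zeroExtData K g M (u + 1)).Mod j) :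
    a = b :=
  have := zeroExtData_mod_subsingleton K g M (t := u + 1) (i := j) (by omega)
  Subsingleton.elim a b

theorem retractionToZero_comm {j : ℕ} (hj : j < u + 1) (m : E.Mod (j + 1)) :
    retractionToZero E u gmap j (E.d j m) =
      (zeroExtData K g M (u + 1)).d j (retractionToZero E u gmap (j + 1) m) := by
  obtain hj | rfl : j < u ∨ j = u := by omega
  · exact retractionToZero_eq_of_lt hj _ _
  · rw [retractionToZero_apply, retractionToZero_apply, LieCrossedExtData.retractionFamily_self,
      LieCrossedExtData.retractionFamily_succ, LinearMap.comp_apply, zeroExtData_d_mk]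

theorem retractionToZero_lie_of_le (hE : IsLieCrossedExt E)
    (hgmap : ∀ (x : g) (m : E.Mod u), gmap ⁅x, m⁆ = ⁅x, gmap m⁆)
    {j : ℕ} (hj : j ≤ u + 1) (x : g) (m : E.Mod j) :
    retractionToZero E u gmap j ⁅x, m⁆ = ⁅x, retractionToZero E u gmap j m⁆ := by
  obtain hj | rfl | rfl : j < u ∨ j = u ∨ j = u + 1 := by omega
  · exact retractionToZero_eq_of_lt hj _ _
  · exact retractionToZero_lie (by simpa using hgmap x m)
  · refine retractionToZero_lie ?_
    simp [E.d_lie hE (Nat.lt_succ_self u), hgmap]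

theorem retractionToZero_e (hretract : ∀ m : M, gmap (E.d u (E.e m)) = m) (m : M) :
    retractionToZero E u gmap (u + 1) (E.e m) = (zeroExtData K g M (u + 1)).e m := by
  rw [retractionToZero_apply, LieCrossedExtData.retractionFamily_succ, LinearMap.comp_apply,
    hretract, zeroExtData_e_apply]

theorem isLieCrossedExtHom_retractionToZero (hE : IsLieCrossedExt E)
    (hgmap : ∀ (x : g) (m : E.Mod u), gmap ⁅x, m⁆ = ⁅x, gmap m⁆)
    (hretract : ∀ m : M, gmap (E.d u (E.e m)) = m) :
    IsLieCrossedExtHom E (zeroExtData K g M (u + 1)) E.π 0 (retractionToZero E u gmap) :=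
  ⟨fun _ => rfl, fun v => (E.π_d1_apply hE v).symm, fun _ _ => Subsingleton.elim _ _,
    fun _ => Subsingleton.elim _ _, fun _ hj => retractionToZero_comm hj,
    fun _ hj => retractionToZero_lie_of_le hE hgmap hj, retractionToZero_e hretract⟩

end Retraction

/-- let `E` be a crossed `n`-fold extension of `g` by `M` (`n = u + 3 ≥ 3`)
and suppose there is a morphism of `g`-modules `gmap : M_{n-1} → M` with `gmap ∘ f = id`.
Then `(id_M, gmap, 0, …, 0, π)` is a morphism of crossed `n`-fold extensions from `E` to
the zero extension `0 → M = M → 0 → ⋯ → 0 → g = g → 0`; in particular all the squares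
commute and `(0, π)` is a morphism of crossed modules. -/
theorem crossed_ext_stmt13 (u : ℕ) (E : LieCrossedExtData K g M (u + 1))
    (hE : IsLieCrossedExt E)
    -- the g-module retraction gmap of f (here f = (d u) ∘ e : M → M_{n-1} = Mod u)
    (gmap : E.Mod u →ₗ[K] M)
    (hgmap : ∀ (x : g) (m : E.Mod u), gmap ⁅x, m⁆ = ⁅x, gmap m⁆)
    (hretract : ∀ m : M, gmap (E.d u (E.e m)) = m) :
    ∃ δMod : ∀ i : ℕ, E.Mod i →ₗ[K] (zeroExtData K g M (u + 1)).Mod i,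
      -- δMod is zero below the top and is (the quotient copy of) gmap at the top,
      (∀ j, j < u → ∀ m : E.Mod j, δMod j m = 0) ∧
      (∀ m : E.Mod u, δMod u m = Submodule.Quotient.mk (gmap m)) ∧
      -- and together with β = π : L → g and δ₁ = 0 : M₁ → 0 it is a morphism of crossed
      -- (u+3)-fold extensions from E to the zero extension, inducing the identity on g, M.
      IsLieCrossedExtHom E (zeroExtData K g M (u + 1)) E.π 0 δMod :=
  ⟨retractionToZero E u gmap, fun _ hj _ => retractionToZero_eq_of_lt hj _ _,
    retractionToZero_apply_self, isLieCrossedExtHom_retractionToZero hE hgmap hretract⟩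
end
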